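/- arXiv:1912.04366 — 6 statements merged into one kernel-verified Lean document; each statement's English description precedes it below -/
import Mathlib

section
/- The join-irreducible elements of the lattice SubPart(X) of subpartitions of a finite set X with |X| ≥ 2 are exactly the subpartitions consisting of a single block of size one or two: {{x}} for x ∈ X, and {{x,x'}} for distinct x, x' ∈ X. -/
/-- A subpartition of `X`: a collection of nonempty pairwise disjoint blocks. -/
structure Subpartition (X : Type*) where
  blocks : Set (Set X)
  nonempty_blocks : ∀ B ∈ blocks, B.Nonempty
  pairwise_disjoint : ∀ B ∈ blocks, ∀ C ∈ blocks, B ≠ C → Disjoint B C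

/-- `P` refines `Q`: every block of `P` is contained in some block of `Q`. -/
def Subpartition.Refines {X : Type*} (P Q : Subpartition X) : Prop :=
  ∀ B ∈ P.blocks, ∃ C ∈ Q.blocks, B ⊆ C

/-- The empty subpartition: the zero element of `SubPart(X)`. -/
def Subpartition.empty (X : Type*) : Subpartition X :=
  ⟨∅, fun _ h => absurd h (Set.notMem_empty _), fun _ h => absurd h (Set.notMem_empty _)⟩

/-- `J` is the join (least upper bound) of `P` and `Q` with respect to refinement. -/
def Subpartition.IsJoin {X : Type*} (P Q J : Subpartition X) : Prop :=
  P.Refines J ∧ Q.Refines J ∧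
    ∀ S : Subpartition X, P.Refines S → Q.Refines S → J.Refines S

/-- `P` is join-irreducible: nonzero, and whenever `P` is the join of `Q` and `R`,
`P = Q` or `P = R`. -/
def Subpartition.JoinIrred {X : Type*} (P : Subpartition X) : Prop :=
  P ≠ Subpartition.empty X ∧
    ∀ Q R : Subpartition X, Subpartition.IsJoin Q R P → P = Q ∨ P = R

/-!
A join-irreducible subpartition has exactly one block, since otherwise it is the join of
one of its blocks with the remaining ones. That block `B` has at most two points: if
`x, y, z ∈ B` are distinct, the blocks `B \ {x}` and `B \ {y}` overlap in `z`, so any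
subpartition above both has a block containing their union `B`. Conversely, if `|B| ≤ 2`,
the blocks below `{B}` other than `B` itself are singletons, which form a subpartition
together; hence a join equal to `{B}` must already contain the block `B`.
-/

open Set

namespace Subpartition

variable {X : Type*}

theorem ext {P Q : Subpartition X} (h : P.blocks = Q.blocks) : P = Q := by
  cases P; cases Q; cases h; rfl

def single (B : Set X) (hB : B.Nonempty) : Subpartition X where
  blocks := {B}
  nonempty_blocks _ hC := hC ▸ hB
  pairwise_disjoint _ hC _ hD hCD := absurd (hC.trans hD.symm) hCD

theorem single_inj {B C : Set X} {hB : B.Nonempty} {hC : C.Nonempty} :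
    single B hB = single C hC ↔ B = C :=
  ⟨fun h => singleton_eq_singleton_iff.1 (congrArg blocks h), fun h => by subst h; rfl⟩

theorem eq_single {P : Subpartition X} {B : Set X} (h : P.blocks = {B}) :
    P = single B (P.nonempty_blocks B (h ▸ rfl)) :=
  ext h

def erase (P : Subpartition X) (B : Set X) : Subpartition X where
  blocks := P.blocks \ {B}
  nonempty_blocks C hC := P.nonempty_blocks C hC.1
  pairwise_disjoint _ hC _ hD := P.pairwise_disjoint _ hC.1 _ hD.1

def union (Q R : Subpartition X) (h : (Q.blocks ∪ R.blocks).PairwiseDisjoint id) :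
    Subpartition X where
  blocks := Q.blocks ∪ R.blocks
  nonempty_blocks C hC := hC.elim (Q.nonempty_blocks C) (R.nonempty_blocks C)
  pairwise_disjoint _ hC _ hD hCD := h hC hD hCD

theorem isJoin_erase_single {P : Subpartition X} {B : Set X} (hB : B ∈ P.blocks) :
    IsJoin (P.erase B) (single B (P.nonempty_blocks B hB)) P := by
  refine ⟨fun C hC => ⟨C, hC.1, subset_rfl⟩, fun C hC => ⟨B, hB, hC.subset⟩,
    fun S hPS hBS C hC => ?_⟩
  by_cases hCB : C = B
  · exact hBS C hCB
  · exact hPS C ⟨hC, hCB⟩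

theorem isJoin_single_union {C D : Set X} (hC : C.Nonempty) (hD : D.Nonempty)
    (hCD : (C ∩ D).Nonempty) :
    IsJoin (single C hC) (single D hD) (single (C ∪ D) (hC.mono subset_union_left)) := by
  refine ⟨fun E hE => ⟨C ∪ D, rfl, hE.subset.trans subset_union_left⟩,
    fun E hE => ⟨C ∪ D, rfl, hE.subset.trans subset_union_right⟩, fun S hCS hDS E hE => ?_⟩
  obtain ⟨C', hC', hCC'⟩ := hCS C rfl
  obtain ⟨D', hD', hDD'⟩ := hDS D rfl
  obtain ⟨z, hzC, hzD⟩ := hCD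
  obtain rfl : C' = D' := by
    by_contra hne
    exact (S.pairwise_disjoint C' hC' D' hD' hne).ne_of_mem (hCC' hzC) (hDD' hzD) rfl
  exact ⟨C', hC', hE.subset.trans (union_subset hCC' hDD')⟩

theorem blocks_eq_singleton_of_joinIrred {P : Subpartition X} (hP : P.JoinIrred) {B : Set X}
    (hB : B ∈ P.blocks) : P.blocks = {B} := by
  rcases hP.2 _ _ (isJoin_erase_single hB) with h | h
  · exact absurd (h ▸ hB : B ∈ (P.erase B).blocks).2 (not_not.2 rfl)
  · exact congrArg blocks h

theorem encard_le_two_of_joinIrred {B : Set X} {hB : B.Nonempty} (hP : (single B hB).JoinIrred) :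
    B.encard ≤ 2 := by
  have hpair : ∀ x ∈ B, ∀ y ∈ B, x ≠ y → B ⊆ {x, y} := by
    intro x hx y hy hxy z hz
    by_contra hzxy
    simp only [mem_insert_iff, mem_singleton_iff, not_or] at hzxy
    have hx' : (B \ {x}).Nonempty := ⟨y, hy, hxy.symm⟩
    have hy' : (B \ {y}).Nonempty := ⟨x, hx, hxy⟩
    have hunion : B \ {x} ∪ B \ {y} = B := by
      rw [← sdiff_inter, disjoint_iff_inter_eq_empty.1 (disjoint_singleton.2 hxy), sdiff_empty]
    have hJ := isJoin_single_union hx' hy' ⟨z, ⟨hz, hzxy.1⟩, hz, hzxy.2⟩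
    simp only [hunion] at hJ
    rcases hP.2 _ _ hJ with h | h
    · exact (single_inj.1 h ▸ hx : x ∈ B \ {x}).2 rfl
    · exact (single_inj.1 h ▸ hy : y ∈ B \ {y}).2 rfl
  rcases B.subsingleton_or_nontrivial with hsub | ⟨x, hx, y, hy, hxy⟩
  · exact (encard_le_one_iff_subsingleton.2 hsub).trans one_le_two
  · exact (encard_le_encard (hpair x hx y hy hxy)).trans_eq (encard_pair hxy)

theorem subset_of_refines_single {Q : Subpartition X} {B C : Set X} {hB : B.Nonempty}
    (hQ : Q.Refines (single B hB)) (hC : C ∈ Q.blocks) : C ⊆ B := by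
  obtain ⟨B', hB', hCB'⟩ := hQ C hC
  exact (mem_singleton_iff.1 hB') ▸ hCB'

theorem eq_single_of_refines_of_mem {Q : Subpartition X} {B : Set X} {hB : B.Nonempty}
    (hQ : Q.Refines (single B hB)) (hBQ : B ∈ Q.blocks) : Q = single B hB := by
  refine ext (eq_singleton_iff_unique_mem.2 ⟨hBQ, fun C hC => ?_⟩)
  by_contra hCB
  obtain ⟨z, hz⟩ := Q.nonempty_blocks C hC
  exact (Q.pairwise_disjoint C hC B hBQ hCB).ne_of_mem hz (subset_of_refines_single hQ hC hz) rfl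

theorem mem_or_mem_of_isJoin_single {Q R : Subpartition X} {B : Set X} {hB : B.Nonempty}
    (hJ : IsJoin Q R (single B hB)) (h : (Q.blocks ∪ R.blocks).PairwiseDisjoint id) :
    B ∈ Q.blocks ∨ B ∈ R.blocks := by
  obtain ⟨C, hC, hBC⟩ := hJ.2.2 (Q.union R h) (fun C hC => ⟨C, Or.inl hC, subset_rfl⟩)
    (fun C hC => ⟨C, Or.inr hC, subset_rfl⟩) B rfl
  have hCB : C ⊆ B :=
    hC.elim (subset_of_refines_single hJ.1) (subset_of_refines_single hJ.2.1)
  exact (subset_antisymm hCB hBC) ▸ hC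

theorem subsingleton_of_refines_single {Q : Subpartition X} {B : Set X} {hB : B.Nonempty}
    (hB2 : B.encard ≤ 2) (hQ : Q.Refines (single B hB)) (hBQ : B ∉ Q.blocks) :
    ∀ C ∈ Q.blocks, C.Subsingleton := by
  intro C hC
  have hCB := subset_of_refines_single hQ hC
  have hlt : C.encard < B.encard :=
    (finite_of_encard_le_coe hB2).subset hCB |>.encard_lt_encard
      (ssubset_of_subset_of_ne hCB (by rintro rfl; exact hBQ hC))
  exact encard_le_one_iff_subsingleton.1 (ENat.lt_two_iff.1 (hlt.trans_le hB2))

theorem pairwiseDisjoint_of_subsingleton {S : Set (Set X)} (hne : ∀ C ∈ S, C.Nonempty)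
    (hsub : ∀ C ∈ S, C.Subsingleton) : S.PairwiseDisjoint id := by
  intro C hC D hD hCD
  obtain ⟨c, rfl⟩ := (hne C hC).exists_eq_singleton_or_nontrivial.resolve_right
    (hsub C hC).not_nontrivial
  obtain ⟨d, rfl⟩ := (hne D hD).exists_eq_singleton_or_nontrivial.resolve_right
    (hsub D hD).not_nontrivial
  exact disjoint_singleton.2 (fun h => hCD (h ▸ rfl))

theorem joinIrred_single {B : Set X} (hB : B.Nonempty) (hB2 : B.encard ≤ 2) :
    (single B hB).JoinIrred := by
  refine ⟨fun h => (congrArg blocks h ▸ rfl : B ∈ (Subpartition.empty X).blocks),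
    fun Q R hJ => ?_⟩
  by_cases hBQ : B ∈ Q.blocks
  · exact Or.inl (eq_single_of_refines_of_mem hJ.1 hBQ).symm
  by_cases hBR : B ∈ R.blocks
  · exact Or.inr (eq_single_of_refines_of_mem hJ.2.1 hBR).symm
  refine absurd (mem_or_mem_of_isJoin_single hJ (pairwiseDisjoint_of_subsingleton ?_ ?_))
    (not_or.2 ⟨hBQ, hBR⟩)
  · exact fun C hC => hC.elim (Q.nonempty_blocks C) (R.nonempty_blocks C)
  · exact fun C hC => hC.elim (subsingleton_of_refines_single hB2 hJ.1 hBQ C)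
      (subsingleton_of_refines_single hB2 hJ.2.1 hBR C)

theorem joinIrred_iff {P : Subpartition X} :
    P.JoinIrred ↔ ∃ B, P.blocks = {B} ∧ B.encard ≤ 2 := by
  constructor
  · intro hP
    obtain ⟨B, hB⟩ : P.blocks.Nonempty :=
      nonempty_iff_ne_empty.2 fun h => hP.1 (ext h)
    have hPB := blocks_eq_singleton_of_joinIrred hP hB
    exact ⟨B, hPB, encard_le_two_of_joinIrred (eq_single hPB ▸ hP)⟩
  · rintro ⟨B, hPB, hB2⟩
    exact eq_single hPB ▸ joinIrred_single _ hB2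

end Subpartition

theorem Set.nonempty_and_encard_le_two_iff {α : Type*} {B : Set α} :
    B.Nonempty ∧ B.encard ≤ 2 ↔ (∃ x, B = {x}) ∨ ∃ x x', x ≠ x' ∧ B = {x, x'} := by
  rw [← encard_eq_one, ← encard_eq_two, ← encard_pos]
  constructor
  · rintro ⟨hpos, hle⟩
    rcases hle.lt_or_eq with hlt | heq
    · exact Or.inl (le_antisymm (ENat.lt_two_iff.1 hlt) (Order.one_le_iff_pos.2 hpos))
    · exact Or.inr heq
  · rintro (h | h) <;> simp [h]

theorem subpartition_joinIrreducibles_general {X : Type*} (P : Subpartition X) :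
    P.JoinIrred ↔
      (∃ x : X, P.blocks = {({x} : Set X)}) ∨
      (∃ x x' : X, x ≠ x' ∧ P.blocks = {({x, x'} : Set X)}) := by
  rw [Subpartition.joinIrred_iff]
  constructor
  · rintro ⟨B, hPB, hB2⟩
    rcases Set.nonempty_and_encard_le_two_iff.1 ⟨P.nonempty_blocks B (hPB ▸ rfl), hB2⟩ with
      ⟨x, rfl⟩ | ⟨x, x', hxx', rfl⟩
    · exact Or.inl ⟨x, hPB⟩
    · exact Or.inr ⟨x, x', hxx', hPB⟩
  · rintro (⟨x, hPB⟩ | ⟨x, x', hxx', hPB⟩)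
    · exact ⟨_, hPB, (Set.nonempty_and_encard_le_two_iff.2 (Or.inl ⟨x, rfl⟩)).2⟩
    · exact ⟨_, hPB, (Set.nonempty_and_encard_le_two_iff.2 (Or.inr ⟨x, x', hxx', rfl⟩)).2⟩

/-- For a finite set `X` with at least two elements, the join-irreducible elements of
the lattice of subpartitions of `X` are exactly the subpartitions consisting of a
single block of size one or two. -/
theorem subpartition_joinIrreducibles {X : Type*} [Finite X]
    (hX : ∃ x y : X, x ≠ y) (P : Subpartition X) :
    P.JoinIrred ↔
      (∃ x : X, P.blocks = {({x} : Set X)}) ∨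
      (∃ x x' : X, x ≠ x' ∧ P.blocks = {({x, x'} : Set X)}) :=
  subpartition_joinIrreducibles_general P
end

section
/- Interleaving by parts: Let (P, ≤, Ω) be a poset with a flow and Q a poset with zero element and join-dense subset B. For order-preserving maps F, G : P → Q and ε ≥ 0, F and G are ε-interleaved (F ≤ G∘Ω_ε and G ≤ F∘Ω_ε pointwise) if and only if for every b ∈ B, the b-parts F_b and G_b are ε-interleaved. Consequently d_I(F,G) = sup_{b∈B} d_I(F_b, G_b). -/
/-- A (strict) flow on a poset `P`. -/
structure PosetFlow (P : Type*) [Preorder P] where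
  toFun : NNReal → P → P
  mono : ∀ t : NNReal, Monotone (toFun t)
  mono_param : ∀ s t : NNReal, s ≤ t → ∀ p : P, toFun s p ≤ toFun t p
  map_zero : ∀ p : P, toFun 0 p = p
  comp : ∀ s t : NNReal, ∀ p : P, toFun t (toFun s p) = toFun (t + s) p

/-- `F` and `G` are `ε`-interleaved: `F ≤ G∘Ω_ε` and `G ≤ F∘Ω_ε` pointwise. -/
def Interleaved {P Q : Type*} [Preorder P] [Preorder Q] (Ω : PosetFlow P)
    (F G : P → Q) (ε : NNReal) : Prop :=
  (∀ p : P, F p ≤ G (Ω.toFun ε p)) ∧ (∀ p : P, G p ≤ F (Ω.toFun ε p))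

/-- The interleaving distance: the infimum of the `ε ≥ 0` at which `F` and `G` are
`ε`-interleaved (`∞` if there is none). -/
noncomputable def interDist {P Q : Type*} [Preorder P] [Preorder Q] (Ω : PosetFlow P)
    (F G : P → Q) : ENNReal :=
  sInf {e : ENNReal | ∃ ε : NNReal, e = (ε : ENNReal) ∧ Interleaved Ω F G ε}

open Classical in
/-- The `b`-part of `F`: `F_b(p) = b` if `b ≤ F(p)`, and `0` otherwise. -/
noncomputable def bpart {P Q : Type*} [LE Q] [Bot Q] (F : P → Q) (b : Q) : P → Q :=
  fun p => if b ≤ F p then b else ⊥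

lemma bpart_le_iff {P Q : Type*} [Preorder Q] [OrderBot Q] (F G : P → Q) (b : Q)
    (p q : P) : bpart F b p ≤ bpart G b q ↔ (b ≤ F p → b ≤ G q) := by
  classical
  simp only [bpart]
  constructor
  · intro h hb
    rw [if_pos hb] at h
    by_cases hg : b ≤ G q
    · exact hg
    · rw [if_neg hg] at h
      exact le_trans h bot_le
  · intro h
    by_cases hf : b ≤ F p
    · rw [if_pos hf, if_pos (h hf)]
    · rw [if_neg hf]; exact bot_le

lemma bpart_mono {P Q : Type*} [Preorder P] [Preorder Q] [OrderBot Q] {F : P → Q}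
    (hF : Monotone F) (b : Q) : Monotone (bpart F b) := by
  classical
  intro p q hpq
  simp only [bpart]
  by_cases hf : b ≤ F p
  · rw [if_pos hf, if_pos (hf.trans (hF hpq))]
  · rw [if_neg hf]; exact bot_le

lemma interleaved_mono {P Q : Type*} [Preorder P] [Preorder Q] (Ω : PosetFlow P)
    {F G : P → Q} (hF : Monotone F) (hG : Monotone G) {ε ε' : NNReal} (h : ε ≤ ε')
    (hi : Interleaved Ω F G ε) : Interleaved Ω F G ε' := by
  refine ⟨fun p => (hi.1 p).trans (hG (Ω.mono_param _ _ h p)),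
    fun p => (hi.2 p).trans (hF (Ω.mono_param _ _ h p))⟩

/-- Interleaving by parts: for order-preserving maps `F, G : P → Q` into a poset `Q`
with zero element and join-dense subset `B`, `F` and `G` are `ε`-interleaved iff all
their `b`-parts are `ε`-interleaved, and consequently the interleaving distance of
`F` and `G` is the supremum over `b ∈ B` of the interleaving distances of their
`b`-parts. -/
theorem interleaving_by_parts {P Q : Type*} [PartialOrder P] [PartialOrder Q]
    [OrderBot Q] (Ω : PosetFlow P) (B : Set Q)
    (hB : ∀ q : Q, ∃ S ⊆ B, IsLUB S q)
    (F G : P → Q) (hF : Monotone F) (hG : Monotone G) :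
    (∀ ε : NNReal, Interleaved Ω F G ε ↔
      ∀ b ∈ B, Interleaved Ω (bpart F b) (bpart G b) ε) ∧
    interDist Ω F G = ⨆ b ∈ B, interDist Ω (bpart F b) (bpart G b) := by
  have key : ∀ x y : Q, (∀ b ∈ B, b ≤ x → b ≤ y) → x ≤ y := by
    intro x y h
    obtain ⟨S, hS, hlub⟩ := hB x
    exact hlub.2 (fun s hs => h s (hS hs) (hlub.1 hs))
  have main : ∀ ε : NNReal, Interleaved Ω F G ε ↔
      ∀ b ∈ B, Interleaved Ω (bpart F b) (bpart G b) ε := by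
    intro ε
    constructor
    · rintro ⟨h1, h2⟩ b _
      exact ⟨fun p => (bpart_le_iff F G b p _).2 (fun hb => hb.trans (h1 p)),
        fun p => (bpart_le_iff G F b p _).2 (fun hb => hb.trans (h2 p))⟩
    · intro h
      refine ⟨fun p => key _ _ (fun b hb hle => ?_),
        fun p => key _ _ (fun b hb hle => ?_)⟩
      · exact (bpart_le_iff F G b p _).1 ((h b hb).1 p) hle
      · exact (bpart_le_iff G F b p _).1 ((h b hb).2 p) hle
  refine ⟨main, ?_⟩
  apply le_antisymm
  · -- interDist ≤ sup
    by_contra hc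
    push_neg at hc
    obtain ⟨r, hr1, hr2⟩ := ENNReal.lt_iff_exists_nnreal_btwn.1 hc
    -- interleaved at r
    have hint : Interleaved Ω F G r := by
      rw [main]
      intro b hb
      have : interDist Ω (bpart F b) (bpart G b) < r := by
        refine lt_of_le_of_lt ?_ hr1
        exact le_iSup₂ (f := fun b _ => interDist Ω (bpart F b) (bpart G b)) b hb
      obtain ⟨e, ⟨ε', rfl, hε'⟩, hlt⟩ := sInf_lt_iff.1 this
      exact interleaved_mono Ω (bpart_mono hF b) (bpart_mono hG b)
        (by exact_mod_cast hlt.le) hε'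
    have : interDist Ω F G ≤ r := sInf_le ⟨r, rfl, hint⟩
    exact absurd (this.trans_lt hr2) (lt_irrefl _)
  · -- sup ≤ interDist
    refine iSup₂_le (fun b hb => ?_)
    refine le_sInf (fun e he => ?_)
    obtain ⟨ε, rfl, hε⟩ := he
    exact sInf_le ⟨ε, rfl, ((main ε).1 hε) b hb⟩
end

section
/- Let (P, ≤, Ω) be a poset with a flow, Q a poset with zero element, x ∈ Q nonzero, and U, V upper sets of P. Then the upper-set indicator maps I_x^U and I_x^V (sending p to x if p ∈ U, else 0) are ε-interleaved with respect to the flow if and only if U ⊆ Ω̂_ε(V) and V ⊆ Ω̂_ε(U); hence d_I(I_x^U, I_x^V) equals the interleaving distance between U and V in the poset of upper sets with the induced flow Ω̂. -/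
/-- The induced map on subsets: `Ω̂_ε(A) = {p : Ω_ε(p) ∈ A}`. -/
def PosetFlow.hat {P : Type*} [Preorder P] (Ω : PosetFlow P) (ε : NNReal)
    (A : Set P) : Set P :=
  {p : P | Ω.toFun ε p ∈ A}

open Classical in
/-- The upper-set indicator map `I_x^U : P → Q`, sending `p` to `x` if `p ∈ U` and to
`0` otherwise. -/
noncomputable def indMap {P Q : Type*} [Bot Q] (x : Q) (U : Set P) : P → Q :=
  fun p => if p ∈ U then x else ⊥

/-- For a nonzero `x ∈ Q` and upper sets `U, V` of `P`, the indicator maps `I_x^U` and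
`I_x^V` are `ε`-interleaved iff `U ⊆ Ω̂_ε(V)` and `V ⊆ Ω̂_ε(U)`; hence their
interleaving distance equals the interleaving distance between the upper sets `U` and
`V` with respect to the induced flow `Ω̂`. -/
theorem indicator_interleaving {P Q : Type*} [PartialOrder P] [PartialOrder Q]
    [OrderBot Q] (Ω : PosetFlow P) (x : Q) (hx : x ≠ ⊥)
    (U V : Set P) (hU : IsUpperSet U) (hV : IsUpperSet V) :
    (∀ ε : NNReal, Interleaved Ω (indMap x U) (indMap x V) ε ↔
      (U ⊆ Ω.hat ε V ∧ V ⊆ Ω.hat ε U)) ∧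
    interDist Ω (indMap x U) (indMap x V) =
      sInf {e : ENNReal | ∃ ε : NNReal, e = (ε : ENNReal) ∧
        U ⊆ Ω.hat ε V ∧ V ⊆ Ω.hat ε U} := by

  have key : ∀ (A B : Set P) (f : P → P),
      (∀ p : P, indMap x A p ≤ indMap x B (f p)) ↔ (∀ p ∈ A, f p ∈ B) := by
    intro A B f
    constructor
    · intro h p hp
      have := h p
      simp only [indMap, if_pos hp] at this
      by_contra hnb
      rw [if_neg hnb] at this
      exact hx (le_bot_iff.mp this)
    · intro h p
      by_cases hp : p ∈ A
      · simp [indMap, if_pos hp, if_pos (h p hp)]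
      · simp [indMap, if_neg hp]
  have main : ∀ ε : NNReal, Interleaved Ω (indMap x U) (indMap x V) ε ↔
      (U ⊆ Ω.hat ε V ∧ V ⊆ Ω.hat ε U) := by
    intro ε
    constructor
    · rintro ⟨h1, h2⟩
      exact ⟨fun p hp => (key U V _).mp h1 p hp, fun p hp => (key V U _).mp h2 p hp⟩
    · rintro ⟨h1, h2⟩
      exact ⟨(key U V _).mpr fun p hp => h1 hp, (key V U _).mpr fun p hp => h2 hp⟩
  refine ⟨main, ?_⟩
  unfold interDist
  congr 1
  ext e
  simp only [Set.mem_setOf_eq]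
  constructor
  · rintro ⟨ε, rfl, h⟩; exact ⟨ε, rfl, (main ε).mp h⟩
  · rintro ⟨ε, rfl, h⟩; exact ⟨ε, rfl, (main ε).mpr h⟩
end

section
/- Let A and B be (closed) upper sets of Int = {(a,b) ∈ ℝ² : a < b} with the order (a,b) ≤ (a',b') iff a' ≤ a and b ≤ b'. Then the Hausdorff distance of A and B with respect to the ℓ∞ norm equals the supremum over all lines ℓ of slope −1 in ℝ² of the Hausdorff distance between A ∩ ℓ and B ∩ ℓ. -/
/-- The poset `Int = {(a,b) ∈ ℝ² : a < b}` as a subset of the plane. -/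
def IntSet : Set (ℝ × ℝ) := {p : ℝ × ℝ | p.1 < p.2}

/-- The order on `Int`: `(a,b) ≤ (a',b')` iff `a' ≤ a` and `b ≤ b'`. -/
def IntLe (p q : ℝ × ℝ) : Prop := q.1 ≤ p.1 ∧ p.2 ≤ q.2

/-- `A` is an upper set of `Int`. -/
def UpperInInt (A : Set (ℝ × ℝ)) : Prop :=
  ∀ p ∈ A, ∀ q ∈ IntSet, IntLe p q → q ∈ A

/-- The `ℓ∞` distance in the plane. -/
def dinf (p q : ℝ × ℝ) : ℝ := max |p.1 - q.1| |p.2 - q.2|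

/-- The `ε`-thickening of `A` inside `Int`, with respect to the `ℓ∞` norm. -/
def thick (A : Set (ℝ × ℝ)) (ε : ℝ) : Set (ℝ × ℝ) :=
  {x ∈ IntSet | ∃ a ∈ A, dinf a x ≤ ε}

/-- The Hausdorff distance in `(Int, ℓ∞)`:
`d_H(A,B) = inf{ε ≥ 0 : A ⊆ B^ε and B ⊆ A^ε}`. -/
noncomputable def hausdorffD (A B : Set (ℝ × ℝ)) : ENNReal :=
  sInf {e : ENNReal | ∃ ε : NNReal, e = (ε : ENNReal) ∧
    A ⊆ thick B ε ∧ B ⊆ thick A ε}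

/-- The line of slope `−1` in the plane with coordinate sum `c`. -/
def negLine (c : ℝ) : Set (ℝ × ℝ) := {p : ℝ × ℝ | p.1 + p.2 = c}

lemma thick_mono_eps {A : Set (ℝ × ℝ)} {ε ε' : ℝ} (h : ε ≤ ε') :
    thick A ε ⊆ thick A ε' := by
  rintro x ⟨hx, a, ha, hd⟩
  exact ⟨hx, a, ha, hd.trans h⟩

lemma thick_mono_set {A A' : Set (ℝ × ℝ)} (h : A ⊆ A') (ε : ℝ) :
    thick A ε ⊆ thick A' ε := by
  rintro x ⟨hx, a, ha, hd⟩
  exact ⟨hx, a, h ha, hd⟩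

/-- Key geometric lemma: a thickening relation between upper sets restricts to
each antidiagonal line. -/
lemma slice_sub {A B : Set (ℝ × ℝ)} (hA : A ⊆ IntSet) (hBu : UpperInInt B)
    {ε : ℝ} (hε : 0 ≤ ε) (h : A ⊆ thick B ε) (c : ℝ) :
    A ∩ negLine c ⊆ thick (B ∩ negLine c) ε := by
  rintro a ⟨haA, hac⟩
  obtain ⟨haI, b, hbB, hd⟩ := h haA
  have ha12 : a.1 < a.2 := haI
  have hc : a.1 + a.2 = c := hac
  have hd1 : |b.1 - a.1| ≤ ε := le_trans (le_max_left _ _) hd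
  have hd2 : |b.2 - a.2| ≤ ε := le_trans (le_max_right _ _) hd
  have hd1' := abs_le.mp hd1
  have hd2' := abs_le.mp hd2
  set t := min a.1 (min b.1 (c - b.2)) with ht
  have htle : t ≤ a.1 := min_le_left _ _
  have htb1 : t ≤ b.1 := le_trans (min_le_right _ _) (min_le_left _ _)
  have htb2 : t ≤ c - b.2 := le_trans (min_le_right _ _) (min_le_right _ _)
  have htge : a.1 - ε ≤ t := by
    refine le_min (by linarith) (le_min (by linarith [hd1'.1]) (by linarith [hd2'.2]))
  refine ⟨haI, (t, c - t), ⟨?_, ?_⟩, ?_⟩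
  · refine hBu b hbB (t, c - t) ?_ ⟨htb1, show b.2 ≤ c - t by linarith⟩
    show t < c - t
    linarith
  · show t + (c - t) = c
    ring
  · show max |t - a.1| |(c - t) - a.2| ≤ ε
    have h1 : |t - a.1| ≤ ε := abs_le.mpr ⟨by linarith, by linarith⟩
    have h2 : |(c - t) - a.2| ≤ ε := abs_le.mpr ⟨by linarith, by linarith⟩
    exact max_le h1 h2

/-- For closed upper sets `A, B` of `Int`, the `ℓ∞` Hausdorff distance between `A`
and `B` equals the supremum over all lines `ℓ` of slope `−1` of the Hausdorff
distance between `A ∩ ℓ` and `B ∩ ℓ`. -/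
theorem hausdorff_eq_sup_over_lines (A B : Set (ℝ × ℝ))
    (hA : A ⊆ IntSet) (hB : B ⊆ IntSet)
    (hAu : UpperInInt A) (hBu : UpperInInt B)
    (hAc : IntSet ∩ closure A ⊆ A) (hBc : IntSet ∩ closure B ⊆ B) :
    hausdorffD A B = ⨆ c : ℝ, hausdorffD (A ∩ negLine c) (B ∩ negLine c) := by
  apply le_antisymm
  · -- hausdorffD A B ≤ sup
    apply ENNReal.le_of_forall_pos_le_add
    intro δ hδ hS
    set S := ⨆ c : ℝ, hausdorffD (A ∩ negLine c) (B ∩ negLine c) with hSdef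
    obtain ⟨s, hs⟩ : ∃ s : NNReal, S = (s : ENNReal) :=
      ⟨S.toNNReal, (ENNReal.coe_toNNReal hS.ne).symm⟩
    have key : ∀ c : ℝ, A ∩ negLine c ⊆ thick B ((s + δ : NNReal) : ℝ) ∧
        B ∩ negLine c ⊆ thick A ((s + δ : NNReal) : ℝ) := by
      intro c
      have h1 : hausdorffD (A ∩ negLine c) (B ∩ negLine c) < ((s + δ : NNReal) : ENNReal) := by
        calc hausdorffD (A ∩ negLine c) (B ∩ negLine c) ≤ S := by rw [hSdef]; exact le_iSup (fun c => hausdorffD (A ∩ negLine c) (B ∩ negLine c)) c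
          _ = (s : ENNReal) := hs
          _ < ((s + δ : NNReal) : ENNReal) := by
              exact_mod_cast lt_add_of_pos_right s hδ
      obtain ⟨e, ⟨ε, rfl, hAB, hBA⟩, hlt⟩ := sInf_lt_iff.mp h1
      have hεle : (ε : ℝ) ≤ ((s + δ : NNReal) : ℝ) := by
        exact_mod_cast hlt.le
      constructor
      · exact hAB.trans ((thick_mono_set Set.inter_subset_left _).trans (thick_mono_eps hεle))
      · exact hBA.trans ((thick_mono_set Set.inter_subset_left _).trans (thick_mono_eps hεle))
    have hA' : A ⊆ thick B ((s + δ : NNReal) : ℝ) :=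
      fun a ha => (key (a.1 + a.2)).1 ⟨ha, rfl⟩
    have hB' : B ⊆ thick A ((s + δ : NNReal) : ℝ) :=
      fun b hb => (key (b.1 + b.2)).2 ⟨hb, rfl⟩
    calc hausdorffD A B ≤ ((s + δ : NNReal) : ENNReal) :=
          sInf_le ⟨s + δ, rfl, hA', hB'⟩
      _ = S + δ := by rw [hs]; push_cast; rfl
  · -- sup ≤ hausdorffD A B
    apply iSup_le
    intro c
    apply sInf_le_sInf
    rintro e ⟨ε, rfl, hAB, hBA⟩
    exact ⟨ε, rfl, slice_sub hA hBu ε.coe_nonneg hAB c,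
      slice_sub hB hAu ε.coe_nonneg hBA c⟩
end

section
/- Let θ be a dendrogram over a finite set X, i.e., an order-preserving right-continuous map ℝ≥0 → Part(X) with θ(0) the discrete partition and θ(t) = {X} for large t. Define u_θ(x,x') = min{t : x ∼_{θ(t)} x'}. Then u_θ is an ultrametric on X: u_θ(x,x'') ≤ max{u_θ(x,x'), u_θ(x',x'')} for all x, x', x'' ∈ X, u_θ is symmetric, and u_θ(x,x') = 0 iff x = x'. -/
/-! Right-continuity makes the infimum defining `u_θ` a minimum, so `x ∼ x'` already holds at
level `u_θ(x, x')`. Monotonicity then puts `x ∼ x'` and `x' ∼ x''` in the common partition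
`θ(max (u_θ(x, x'), u_θ(x', x'')))`, whence `x ∼ x''` there by transitivity; and `u_θ(x, x') = 0`
means `x ∼ x'` in the discrete partition `θ 0`. -/

open scoped NNReal

namespace Dendrogram

variable {X : Type*} (θ : ℝ≥0 → Setoid X)

/-- The paper's `u_θ`. -/
noncomputable def mergeLevel (x y : X) : ℝ≥0 := sInf {t : ℝ≥0 | (θ t).r x y}

variable {θ}

theorem mergeLevel_le {x y : X} {t : ℝ≥0} (h : (θ t).r x y) : mergeLevel θ x y ≤ t :=
  csInf_le (OrderBot.bddBelow _) h

theorem mergeLevel_comm (x y : X) : mergeLevel θ x y = mergeLevel θ y x := by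
  simp only [mergeLevel, Setoid.comm']

theorem mergeLevel_self (x : X) : mergeLevel θ x x = 0 :=
  nonpos_iff_eq_zero.mp (mergeLevel_le ((θ 0).refl' x))

theorem setOf_rel_nonempty {T : ℝ≥0} (hT : θ T = ⊤) (x y : X) :
    {t : ℝ≥0 | (θ t).r x y}.Nonempty :=
  ⟨T, show (θ T).r x y by rw [hT]; trivial⟩

theorem rel_mergeLevel
    (hrc : ∀ t : ℝ≥0, ∃ ε : ℝ≥0, 0 < ε ∧ ∀ s : ℝ≥0, t ≤ s → s ≤ t + ε → θ s = θ t)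
    {x y : X} (hne : {t : ℝ≥0 | (θ t).r x y}.Nonempty) :
    (θ (mergeLevel θ x y)).r x y := by
  obtain ⟨ε, hε, hconst⟩ := hrc (mergeLevel θ x y)
  obtain ⟨s, hs, hs_lt⟩ := exists_lt_of_csInf_lt hne (lt_add_of_pos_right _ hε)
  rwa [← hconst s (mergeLevel_le hs) hs_lt.le]

theorem mergeLevel_le_max (hmono : Monotone θ) {x y z : X}
    (hxy : (θ (mergeLevel θ x y)).r x y) (hyz : (θ (mergeLevel θ y z)).r y z) :
    mergeLevel θ x z ≤ max (mergeLevel θ x y) (mergeLevel θ y z) :=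
  mergeLevel_le <|
    (θ _).trans' (hmono (le_max_left _ _) hxy) (hmono (le_max_right _ _) hyz)

theorem mergeLevel_eq_zero_iff (h0 : θ 0 = ⊥) {x y : X} (hxy : (θ (mergeLevel θ x y)).r x y) :
    mergeLevel θ x y = 0 ↔ x = y := by
  refine ⟨fun h => ?_, fun h => h ▸ mergeLevel_self x⟩
  rw [h, h0] at hxy
  exact hxy

end Dendrogram

open Dendrogram in
theorem dendrogram_ultrametric_general {X : Type*} (θ : NNReal → Setoid X)
    (hmono : Monotone θ) (h0 : θ 0 = ⊥)
    (hT : ∃ T : NNReal, 0 < T ∧ ∀ t : NNReal, T ≤ t → θ t = ⊤)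
    (hrc : ∀ t : NNReal, ∃ ε : NNReal, 0 < ε ∧
      ∀ s : NNReal, t ≤ s → s ≤ t + ε → θ s = θ t) :
    (∀ x x' x'' : X,
      sInf {t : NNReal | (θ t).r x x''} ≤
        max (sInf {t : NNReal | (θ t).r x x'}) (sInf {t : NNReal | (θ t).r x' x''})) ∧
    (∀ x x' : X, sInf {t : NNReal | (θ t).r x x'} = sInf {t : NNReal | (θ t).r x' x}) ∧
    (∀ x x' : X, sInf {t : NNReal | (θ t).r x x'} = 0 ↔ x = x') := by
  obtain ⟨T, -, hTtop⟩ := hT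
  have hmerge (x y : X) : (θ (mergeLevel θ x y)).r x y :=
    rel_mergeLevel hrc (setOf_rel_nonempty (hTtop T le_rfl) x y)
  exact ⟨fun x y z => mergeLevel_le_max hmono (hmerge x y) (hmerge y z),
    mergeLevel_comm, fun x y => mergeLevel_eq_zero_iff h0 (hmerge x y)⟩

/-- For a dendrogram `θ` over a finite set `X` — modelled as a monotone family of
partitions (equivalence relations, i.e. `Setoid`s, ordered by refinement) indexed by
`[0,∞)`, with `θ(0)` the discrete partition, `θ(t) = {X}` for all large `t`, and
right-continuity — the function `u_θ(x,x') = inf{t : x ∼_{θ(t)} x'}` is an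
ultrametric on `X`: it satisfies the ultra-triangle inequality, is symmetric, and
vanishes exactly on the diagonal. -/
theorem dendrogram_ultrametric {X : Type*} [Finite X] (θ : NNReal → Setoid X)
    (hmono : Monotone θ) (h0 : θ 0 = ⊥)
    (hT : ∃ T : NNReal, 0 < T ∧ ∀ t : NNReal, T ≤ t → θ t = ⊤)
    (hrc : ∀ t : NNReal, ∃ ε : NNReal, 0 < ε ∧
      ∀ s : NNReal, t ≤ s → s ≤ t + ε → θ s = θ t) :
    (∀ x x' x'' : X,
      sInf {t : NNReal | (θ t).r x x''} ≤
        max (sInf {t : NNReal | (θ t).r x x'}) (sInf {t : NNReal | (θ t).r x' x''})) ∧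
    (∀ x x' : X, sInf {t : NNReal | (θ t).r x x'} = sInf {t : NNReal | (θ t).r x' x}) ∧
    (∀ x x' : X, sInf {t : NNReal | (θ t).r x x'} = 0 ↔ x = x') :=
  dendrogram_ultrametric_general θ hmono h0 hT hrc
end

section
/- Let θ and θ' be dendrograms over a finite set X, viewed (after extension by ∅ on negative reals) as formigrams, and let u_θ, u_θ' be the induced ultrametrics. For each pair x, x' ∈ X, the upper set U_{{x,x'}}(θ) = {(a,b) ∈ Int : x ∼_{⋁_{s∈(a,b)}θ(s)} x'} equals {(a,b) ∈ Int : b > u_θ(x,x')}, and the ℓ∞ Hausdorff distance between U_{{x,x'}}(θ) and U_{{x,x'}}(θ') equals |u_θ(x,x') − u_{θ'}(x,x')|. -/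
/-- The ultrametric value induced by a dendrogram `θ` (a `[0,∞)`-indexed monotone
family of partitions of `X`, modelled as `Setoid`s): `u_θ(x,x') = inf{t : x ∼_{θ(t)} x'}`. -/
noncomputable def uDist {X : Type*} (θ : NNReal → Setoid X) (x x' : X) : NNReal :=
  sInf {t : NNReal | (θ t).r x x'}

/-- The upper set `U_{{x,x'}}(θ) ⊆ Int` of a dendrogram `θ` (extended by the empty
subpartition on negative reals): the set of intervals `(a,b)` such that
`x ∼ x'` in `⋁_{s ∈ (a,b)} θ(s)`; since `θ` is a monotone (nested) family, this join
relates `x` and `x'` iff `x ∼_{θ(s)} x'` for some nonnegative `s ∈ (a,b)`. -/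
def uppSet {X : Type*} (θ : NNReal → Setoid X) (x x' : X) : Set (ℝ × ℝ) :=
  {p : ℝ × ℝ | p.1 < p.2 ∧
    ∃ s : NNReal, p.1 < (s : ℝ) ∧ (s : ℝ) < p.2 ∧ (θ s).r x x'}

def upperInts (u : ℝ) : Set (ℝ × ℝ) := {p : ℝ × ℝ | p.1 < p.2 ∧ u < p.2}

section Dendrogram

variable {X : Type*} {θ : NNReal → Setoid X} {x x' : X}

lemma uDist_le_of_rel {s : NNReal} (h : (θ s).r x x') : uDist θ x x' ≤ s :=
  csInf_le (OrderBot.bddBelow _) h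

lemma rel_of_uDist_lt (hmono : Monotone θ) (hne : ∃ t, (θ t).r x x') {s : NNReal}
    (h : uDist θ x x' < s) : (θ s).r x x' := by
  obtain ⟨t, ht, hts⟩ := exists_lt_of_csInf_lt hne h
  exact hmono hts.le ht

lemma exists_rel_of_eq_top {T : NNReal} (h : θ T = ⊤) : ∃ t, (θ t).r x x' :=
  ⟨T, by rw [h]; trivial⟩

lemma uppSet_eq_upperInts (hmono : Monotone θ) (hne : ∃ t, (θ t).r x x') :
    uppSet θ x x' = upperInts (uDist θ x x') := by
  ext ⟨a, b⟩
  constructor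
  · rintro ⟨hab, s, -, hsb, hs⟩
    exact ⟨hab, (NNReal.coe_le_coe.2 (uDist_le_of_rel hs)).trans_lt hsb⟩
  · rintro ⟨hab, hub⟩
    obtain ⟨c, hc, hcb⟩ := exists_between (max_lt hab hub)
    lift c to NNReal using (uDist θ x x').coe_nonneg.trans ((le_max_right _ _).trans hc.le)
    exact ⟨hab, c, (le_max_left _ _).trans_lt hc, hcb,
      rel_of_uDist_lt hmono hne (NNReal.coe_lt_coe.1 ((le_max_right _ _).trans_lt hc))⟩

end Dendrogram

lemma upperInts_subset_thick_iff {u v ε : ℝ} (hε : 0 ≤ ε) :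
    upperInts u ⊆ thick (upperInts v) ε ↔ v - u ≤ ε := by
  constructor
  · intro h
    refine le_of_forall_pos_lt_add fun δ hδ => ?_
    have hmem : (u - 1, u + δ) ∈ upperInts u := ⟨by dsimp; linarith, by dsimp; linarith⟩
    obtain ⟨-, q, ⟨-, hvq⟩, hq⟩ := h hmem
    have hq2 := (abs_le.1 ((le_max_right _ _).trans hq)).2
    dsimp at hq2
    linarith
  · rintro h ⟨a, b⟩ ⟨hab, hub⟩
    refine ⟨hab, (a, b + ε), ⟨by dsimp at *; linarith, by dsimp at *; linarith⟩, ?_⟩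
    simp [dinf, abs_of_nonneg hε, hε]

lemma hausdorffD_upperInts (u v : ℝ) :
    hausdorffD (upperInts u) (upperInts v) = ENNReal.ofReal |u - v| := by
  apply le_antisymm
  · have hε : (0 : ℝ) ≤ |u - v|.toNNReal := NNReal.coe_nonneg _
    refine sInf_le ⟨|u - v|.toNNReal, rfl, ?_, ?_⟩
    · rw [upperInts_subset_thick_iff hε, Real.coe_toNNReal _ (abs_nonneg _)]
      exact (abs_sub_le_iff.1 le_rfl).2
    · rw [upperInts_subset_thick_iff hε, Real.coe_toNNReal _ (abs_nonneg _)]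
      exact (abs_sub_le_iff.1 le_rfl).1
  · refine le_sInf ?_
    rintro _ ⟨ε, rfl, huv, hvu⟩
    rw [upperInts_subset_thick_iff ε.coe_nonneg] at huv hvu
    rw [← ENNReal.ofReal_coe_nnreal]
    exact ENNReal.ofReal_le_ofReal (abs_sub_le_iff.2 ⟨hvu, huv⟩)

theorem dendrogram_upper_sets_general {X : Type*}
    (θ θ' : NNReal → Setoid X)
    (hmono : Monotone θ)
    (hT : ∃ T : NNReal, 0 < T ∧ ∀ t : NNReal, T ≤ t → θ t = ⊤)
    (hmono' : Monotone θ')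
    (hT' : ∃ T : NNReal, 0 < T ∧ ∀ t : NNReal, T ≤ t → θ' t = ⊤)
    (x x' : X) :
    uppSet θ x x' =
      {p : ℝ × ℝ | p.1 < p.2 ∧ ((uDist θ x x' : ℝ) < p.2)} ∧
    hausdorffD (uppSet θ x x') (uppSet θ' x x') =
      ENNReal.ofReal |(uDist θ x x' : ℝ) - (uDist θ' x x' : ℝ)| := by
  obtain ⟨T, -, hTop⟩ := hT
  obtain ⟨T', -, hTop'⟩ := hT'
  have hU : uppSet θ x x' = upperInts (uDist θ x x') :=
    uppSet_eq_upperInts hmono (exists_rel_of_eq_top (hTop T le_rfl))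
  have hU' : uppSet θ' x x' = upperInts (uDist θ' x x') :=
    uppSet_eq_upperInts hmono' (exists_rel_of_eq_top (hTop' T' le_rfl))
  exact ⟨hU, by rw [hU, hU', hausdorffD_upperInts]⟩

/-- For dendrograms `θ, θ'` over a finite set `X` with induced ultrametrics
`u_θ, u_θ'`, the upper set `U_{{x,x'}}(θ)` equals `{(a,b) ∈ Int : b > u_θ(x,x')}`,
and the `ℓ∞` Hausdorff distance between `U_{{x,x'}}(θ)` and `U_{{x,x'}}(θ')` equals
`|u_θ(x,x') − u_θ'(x,x')|`. -/
theorem dendrogram_upper_sets {X : Type*} [Finite X]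
    (θ θ' : NNReal → Setoid X)
    (hmono : Monotone θ) (h0 : θ 0 = ⊥)
    (hT : ∃ T : NNReal, 0 < T ∧ ∀ t : NNReal, T ≤ t → θ t = ⊤)
    (hrc : ∀ t : NNReal, ∃ ε : NNReal, 0 < ε ∧
      ∀ s : NNReal, t ≤ s → s ≤ t + ε → θ s = θ t)
    (hmono' : Monotone θ') (h0' : θ' 0 = ⊥)
    (hT' : ∃ T : NNReal, 0 < T ∧ ∀ t : NNReal, T ≤ t → θ' t = ⊤)
    (hrc' : ∀ t : NNReal, ∃ ε : NNReal, 0 < ε ∧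
      ∀ s : NNReal, t ≤ s → s ≤ t + ε → θ' s = θ' t)
    (x x' : X) :
    uppSet θ x x' =
      {p : ℝ × ℝ | p.1 < p.2 ∧ ((uDist θ x x' : ℝ) < p.2)} ∧
    hausdorffD (uppSet θ x x') (uppSet θ' x x') =
      ENNReal.ofReal |(uDist θ x x' : ℝ) - (uDist θ' x x' : ℝ)| :=
  dendrogram_upper_sets_general θ θ' hmono hT hmono' hT' x x'
end
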